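/- arXiv:1502.06428 — 9 statements merged into one kernel-verified Lean document; each statement's English description precedes it below -/
import Mathlib

section
/- For any two probability distributions P and Q on a finite set, -log(Σ_x √(P(x)Q(x))) ≥ -(1/2) log(1 - d_TV(P,Q)²), i.e., the negative log Bhattacharyya coefficient is lower bounded by -(1/2) log(1 - ε²) where ε = d_TV(P,Q), assuming ε < 1. -/
theorem neg_log_bhattacharyya_lower_bound {α : Type*} [Fintype α] (P Q : α → ℝ)
    (hP : ∀ x, 0 ≤ P x) (hQ : ∀ x, 0 ≤ Q x)
    (hP1 : ∑ x, P x = 1) (hQ1 : ∑ x, Q x = 1)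
    (hε1 : (1 / 2) * ∑ x, |P x - Q x| < 1) :
    -Real.log (∑ x, Real.sqrt (P x * Q x)) ≥
      -(1 / 2) * Real.log (1 - ((1 / 2) * ∑ x, |P x - Q x|) ^ 2) := by
  set ε : ℝ := (1 / 2) * ∑ x, |P x - Q x| with hεdef
  set B : ℝ := ∑ x, Real.sqrt (P x * Q x) with hBdef
  have hBnn : 0 ≤ B := Finset.sum_nonneg fun x _ => Real.sqrt_nonneg _
  have hεnn : 0 ≤ ε := by
    apply mul_nonneg (by norm_num)
    exact Finset.sum_nonneg fun x _ => abs_nonneg _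
  -- Cauchy-Schwarz
  have cs := Finset.sum_mul_sq_le_sq_mul_sq Finset.univ
    (fun x => |Real.sqrt (P x) - Real.sqrt (Q x)|)
    (fun x => Real.sqrt (P x) + Real.sqrt (Q x))
  have hprod : ∀ x, |Real.sqrt (P x) - Real.sqrt (Q x)| * (Real.sqrt (P x) + Real.sqrt (Q x))
      = |P x - Q x| := by
    intro x
    rw [← abs_of_nonneg (add_nonneg (Real.sqrt_nonneg (P x)) (Real.sqrt_nonneg (Q x))),
      ← abs_mul]
    congr 1
    have : (Real.sqrt (P x) - Real.sqrt (Q x)) * (Real.sqrt (P x) + Real.sqrt (Q x))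
        = Real.sqrt (P x) ^ 2 - Real.sqrt (Q x) ^ 2 := by ring
    rw [this, Real.sq_sqrt (hP x), Real.sq_sqrt (hQ x)]
  have hsq1 : ∑ x, |Real.sqrt (P x) - Real.sqrt (Q x)| ^ 2 = 2 - 2 * B := by
    have : ∀ x, |Real.sqrt (P x) - Real.sqrt (Q x)| ^ 2
        = P x + Q x - 2 * Real.sqrt (P x * Q x) := by
      intro x
      rw [sq_abs, sub_sq, Real.sq_sqrt (hP x), Real.sq_sqrt (hQ x),
        Real.sqrt_mul (hP x)]
      ring
    rw [Finset.sum_congr rfl fun x _ => this x]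
    rw [Finset.sum_sub_distrib, Finset.sum_add_distrib, hP1, hQ1, ← Finset.mul_sum, ← hBdef]
    ring
  have hsq2 : ∑ x, (Real.sqrt (P x) + Real.sqrt (Q x)) ^ 2 = 2 + 2 * B := by
    have : ∀ x, (Real.sqrt (P x) + Real.sqrt (Q x)) ^ 2
        = P x + Q x + 2 * Real.sqrt (P x * Q x) := by
      intro x
      rw [add_sq, Real.sq_sqrt (hP x), Real.sq_sqrt (hQ x), Real.sqrt_mul (hP x)]
      ring
    rw [Finset.sum_congr rfl fun x _ => this x]
    rw [Finset.sum_add_distrib, Finset.sum_add_distrib, hP1, hQ1, ← Finset.mul_sum, ← hBdef]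
    ring
  have key : (2 * ε) ^ 2 ≤ (2 - 2 * B) * (2 + 2 * B) := by
    have h2ε : 2 * ε = ∑ x, |P x - Q x| := by rw [hεdef]; ring
    rw [h2ε, ← hsq1, ← hsq2]
    calc (∑ x, |P x - Q x|) ^ 2
        = (∑ x, |Real.sqrt (P x) - Real.sqrt (Q x)| * (Real.sqrt (P x) + Real.sqrt (Q x))) ^ 2 := by
          rw [Finset.sum_congr rfl fun x _ => (hprod x).symm]
      _ ≤ _ := cs
  have hB2 : B ^ 2 ≤ 1 - ε ^ 2 := by nlinarith [key]
  have hε2pos : 0 < 1 - ε ^ 2 := by nlinarith [hε1, hεnn]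
  -- B > 0
  have hBpos : 0 < B := by
    rcases hBnn.lt_or_eq with h | h
    · exact h
    · exfalso
      have hzero : ∀ x ∈ Finset.univ, Real.sqrt (P x * Q x) = 0 := by
        intro x _
        have := (Finset.sum_eq_zero_iff_of_nonneg
          (fun x _ => Real.sqrt_nonneg (P x * Q x))).1 h.symm
        exact this x (Finset.mem_univ x)
      have habs : ∀ x, |P x - Q x| = P x + Q x := by
        intro x
        have h0 : P x * Q x = 0 := by
          have := hzero x (Finset.mem_univ x)
          have hnn := mul_nonneg (hP x) (hQ x)
          nlinarith [Real.sq_sqrt hnn, this]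
        rcases mul_eq_zero.1 h0 with h' | h'
        · rw [h', abs_sub_comm, zero_add, abs_of_nonneg (by simpa [h'] using hQ x)]
          simp [h']
        · rw [h']
          rw [sub_zero, add_zero, abs_of_nonneg (hP x)]
      have : ε = 1 := by
        rw [hεdef, Finset.sum_congr rfl fun x _ => habs x, Finset.sum_add_distrib, hP1, hQ1]
        norm_num
      rw [this] at hε1
      exact lt_irrefl 1 hε1
  have hBle : B ≤ Real.sqrt (1 - ε ^ 2) := by
    rw [← Real.sqrt_sq hBnn]
    exact Real.sqrt_le_sqrt hB2
  have hlog : Real.log B ≤ Real.log (Real.sqrt (1 - ε ^ 2)) :=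
    Real.log_le_log hBpos hBle
  rw [Real.log_sqrt hε2pos.le] at hlog
  linarith [hlog]
end

section
/- For any two probability distributions P and Q on a finite set with d_TV(P,Q) = ε, the capacitory discrimination C̄(P,Q) = D(P‖(P+Q)/2) + D(Q‖(P+Q)/2) satisfies C̄(P,Q) ≥ 2·d((1-ε)/2 ‖ 1/2), where d(p‖q) = p log(p/q) + (1-p) log((1-p)/(1-q)) is the binary relative entropy. -/
noncomputable def phiCD (t : ℝ) : ℝ :=
  (1 + t) * Real.log (1 + t) / 2 + (1 - t) * Real.log (1 - t) / 2

lemma phiCD_convex : ConvexOn ℝ (Set.Icc (-1 : ℝ) 1) phiCD := by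
  have g₁ : ℝ →ᵃ[ℝ] ℝ := AffineMap.id ℝ ℝ + AffineMap.const ℝ ℝ 1
  have h1 : ConvexOn ℝ (Set.Icc (-1 : ℝ) 1) (fun t : ℝ => (1 + t) * Real.log (1 + t)) := by
    have := Real.convexOn_mul_log.comp_affineMap (AffineMap.id ℝ ℝ + AffineMap.const ℝ ℝ 1)
    refine (this.subset ?_ (convex_Icc _ _)).congr ?_
    · intro t ht
      simp only [Set.mem_preimage, AffineMap.coe_add, AffineMap.coe_id, AffineMap.coe_const,
        Set.mem_Ici, Pi.add_apply, Function.const_apply, id_eq]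
      simp only [Set.mem_Icc] at ht
      linarith [ht.1]
    · intro t _
      simp [Function.comp, add_comm]
  have h2 : ConvexOn ℝ (Set.Icc (-1 : ℝ) 1) (fun t : ℝ => (1 - t) * Real.log (1 - t)) := by
    have := Real.convexOn_mul_log.comp_affineMap (AffineMap.const ℝ ℝ 1 - AffineMap.id ℝ ℝ)
    refine (this.subset ?_ (convex_Icc _ _)).congr ?_
    · intro t ht
      simp only [Set.mem_preimage, AffineMap.coe_sub, AffineMap.coe_id, AffineMap.coe_const,
        Set.mem_Ici, Pi.sub_apply, Function.const_apply, id_eq]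
      simp only [Set.mem_Icc] at ht
      linarith [ht.2]
    · intro t _
      simp [Function.comp]
  have := (h1.add h2).smul (c := (1/2 : ℝ)) (by norm_num)
  refine this.congr ?_
  intro t _
  simp only [phiCD, Pi.smul_apply, Pi.add_apply, smul_eq_mul]
  ring

lemma phiCD_even (t : ℝ) : phiCD (-t) = phiCD t := by
  simp only [phiCD]
  ring_nf

theorem capacitory_discrimination_lower_bound {α : Type*} [Fintype α] (P Q : α → ℝ)
    (hP : ∀ x, 0 ≤ P x) (hQ : ∀ x, 0 ≤ Q x)
    (hP1 : ∑ x, P x = 1) (hQ1 : ∑ x, Q x = 1)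
    (ε : ℝ) (hε : (1 / 2) * ∑ x, |P x - Q x| = ε) :
    (∑ x, P x * Real.log (P x / ((P x + Q x) / 2))) +
      (∑ x, Q x * Real.log (Q x / ((P x + Q x) / 2))) ≥
      2 * ((1 - ε) / 2 * Real.log (((1 - ε) / 2) / (1 / 2)) +
        (1 - (1 - ε) / 2) * Real.log ((1 - (1 - ε) / 2) / (1 - 1 / 2))) := by
  set w : α → ℝ := fun x => (P x + Q x) / 2 with hw
  set p : α → ℝ := fun x => |(P x - Q x) / (P x + Q x)| with hp
  -- pointwise identity
  have key : ∀ x, P x * Real.log (P x / ((P x + Q x) / 2)) +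
      Q x * Real.log (Q x / ((P x + Q x) / 2)) = 2 * (w x * phiCD (p x)) := by
    intro x
    rcases eq_or_lt_of_le (add_nonneg (hP x) (hQ x)) with hs | hs
    · have hpx : P x = 0 := by nlinarith [hP x, hQ x]
      have hqx : Q x = 0 := by nlinarith [hP x, hQ x]
      simp [hw, hp, hpx, hqx, phiCD]
    · have hs' : P x + Q x ≠ 0 := ne_of_gt hs
      set t := (P x - Q x) / (P x + Q x) with ht
      have e1 : P x / ((P x + Q x) / 2) = 1 + t := by
        rw [ht]; field_simp; ring
      have e2 : Q x / ((P x + Q x) / 2) = 1 - t := by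
        rw [ht]; field_simp; ring
      have hphi : phiCD (p x) = phiCD t := by
        simp only [hp]
        rcases abs_choice ((P x - Q x) / (P x + Q x)) with h | h
        · rw [h]
        · rw [h, phiCD_even]
      have hP' : (1 + t) * (P x + Q x) = 2 * P x := by
        rw [ht]; field_simp; ring
      have hQ' : (1 - t) * (P x + Q x) = 2 * Q x := by
        rw [ht]; field_simp; ring
      clear_value t
      rw [e1, e2, hphi]
      simp only [phiCD, hw]
      linear_combination (-Real.log (1 + t) / 2) * hP' + (-Real.log (1 - t) / 2) * hQ'
  -- weights
  have hw0 : ∀ x ∈ Finset.univ (α := α), 0 ≤ w x := fun x _ =>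
    div_nonneg (add_nonneg (hP x) (hQ x)) (by norm_num)
  have hw1 : ∑ x, w x = 1 := by
    simp only [hw]
    rw [← Finset.sum_div, Finset.sum_add_distrib, hP1, hQ1]
    norm_num
  have hmem : ∀ x ∈ Finset.univ (α := α), p x ∈ Set.Icc (-1 : ℝ) 1 := by
    intro x _
    constructor
    · have := abs_nonneg ((P x - Q x) / (P x + Q x)); simp only [hp]; linarith
    · simp only [hp, abs_div]
      rcases eq_or_lt_of_le (add_nonneg (hP x) (hQ x)) with hs | hs
      · rw [← hs]; norm_num
      · rw [div_le_one (by rwa [abs_of_pos hs])]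
        rw [abs_of_pos hs, abs_le]
        constructor <;> nlinarith [hP x, hQ x]
  -- the weighted sum of points equals ε
  have hsum : ∑ x, w x • p x = ε := by
    rw [← hε]
    rw [Finset.mul_sum]
    apply Finset.sum_congr rfl
    intro x _
    rcases eq_or_lt_of_le (add_nonneg (hP x) (hQ x)) with hs | hs
    · have hpx : P x = 0 := by nlinarith [hP x, hQ x]
      have hqx : Q x = 0 := by nlinarith [hP x, hQ x]
      simp [hw, hp, hpx, hqx]
    · have hs' : P x + Q x ≠ 0 := ne_of_gt hs
      simp only [hw, hp, smul_eq_mul, abs_div, abs_of_pos hs]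
      field_simp
  have jensen := phiCD_convex.map_sum_le hw0 hw1 hmem
  rw [hsum] at jensen
  simp only [smul_eq_mul] at jensen
  -- rewrite RHS
  have e1 : ((1 - ε) / 2) / (1 / 2 : ℝ) = 1 - ε := by ring
  have e2 : (1 - (1 - ε) / 2) / (1 - 1 / 2 : ℝ) = 1 + ε := by ring
  rw [e1, e2]
  have lhs_eq : (∑ x, P x * Real.log (P x / ((P x + Q x) / 2))) +
      (∑ x, Q x * Real.log (Q x / ((P x + Q x) / 2))) = 2 * ∑ x, w x * phiCD (p x) := by
    rw [← Finset.sum_add_distrib, Finset.mul_sum]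
    exact Finset.sum_congr rfl fun x _ => key x
  rw [lhs_eq]
  have : 2 * ((1 - ε) / 2 * Real.log (1 - ε) + (1 - (1 - ε) / 2) * Real.log (1 + ε))
      = 2 * phiCD ε := by
    simp only [phiCD]; ring
  rw [this]
  linarith [jensen]
end

section
/- For any two probability distributions P and Q on a finite set that are mutually absolutely continuous, with d_TV(P,Q) = ε < 1, Jeffreys' divergence J(P,Q) = (D(P‖Q) + D(Q‖P))/2 satisfies J(P,Q) ≥ ε · log((1+ε)/(1-ε)). -/
open Finset

lemma key_alg (q ε : ℝ) (hε : 0 < ε) :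
    (1 + ε) ^ 2 * (q * (1 - (q + ε))) ≤ (1 - ε) ^ 2 * ((q + ε) * (1 - q)) := by
  nlinarith [mul_nonneg hε.le (sq_nonneg (2 * q - 1 + ε))]

lemma log_sum_ineq {α : Type*} (s : Finset α) (a b : α → ℝ)
    (ha : ∀ x ∈ s, 0 ≤ a x) (hb : ∀ x ∈ s, 0 ≤ b x)
    (hab : ∀ x ∈ s, b x = 0 → a x = 0)
    (hA : 0 < ∑ x ∈ s, a x) (hB : 0 < ∑ x ∈ s, b x) :
    (∑ x ∈ s, a x) * Real.log ((∑ x ∈ s, a x) / (∑ x ∈ s, b x)) ≤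
      ∑ x ∈ s, a x * Real.log (a x / b x) := by
  set A := ∑ x ∈ s, a x with hAdef
  set B := ∑ x ∈ s, b x with hBdef
  have key : ∀ x ∈ s, a x * Real.log (A / B) + (a x - b x * (A / B)) ≤
      a x * Real.log (a x / b x) := by
    intro x hx
    rcases (ha x hx).eq_or_lt with h0 | hpos
    · rw [← h0]
      simp only [zero_mul, zero_add, zero_sub]
      have h1 : 0 ≤ b x * (A / B) :=
        mul_nonneg (hb x hx) (le_of_lt (by positivity))
      linarith
    · have hbpos : 0 < b x := by
        rcases (hb x hx).eq_or_lt with h0 | h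
        · exact absurd (hab x hx h0.symm) (ne_of_gt hpos)
        · exact h
      have hkey := Real.log_le_sub_one_of_pos (show 0 < b x * A / (a x * B) by positivity)
      have e1 : Real.log (b x * A / (a x * B)) =
          Real.log (b x) + Real.log A - (Real.log (a x) + Real.log B) := by
        rw [Real.log_div (by positivity) (by positivity),
            Real.log_mul (ne_of_gt hbpos) (ne_of_gt hA),
            Real.log_mul (ne_of_gt hpos) (ne_of_gt hB)]
      have e2 : Real.log (a x / b x) = Real.log (a x) - Real.log (b x) :=
        Real.log_div (ne_of_gt hpos) (ne_of_gt hbpos)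
      have e3 : Real.log (A / B) = Real.log A - Real.log B :=
        Real.log_div (ne_of_gt hA) (ne_of_gt hB)
      have e4 : a x * (b x * A / (a x * B)) = b x * (A / B) := by
        field_simp
      nlinarith [mul_le_mul_of_nonneg_left hkey hpos.le]
  calc A * Real.log (A / B)
      = ∑ x ∈ s, (a x * Real.log (A / B) + (a x - b x * (A / B))) := by
        rw [sum_add_distrib, sum_sub_distrib, ← sum_mul, ← sum_mul, ← hAdef, ← hBdef]
        field_simp; ring
    _ ≤ _ := sum_le_sum key

theorem jeffreys_divergence_lower_bound {α : Type*} [Fintype α] (P Q : α → ℝ)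
    (hP : ∀ x, 0 ≤ P x) (hQ : ∀ x, 0 ≤ Q x)
    (hP1 : ∑ x, P x = 1) (hQ1 : ∑ x, Q x = 1)
    (hac : ∀ x, P x = 0 ↔ Q x = 0)
    (ε : ℝ) (hε : (1 / 2) * ∑ x, |P x - Q x| = ε) (hε1 : ε < 1) :
    ((∑ x, P x * Real.log (P x / Q x)) + (∑ x, Q x * Real.log (Q x / P x))) / 2 ≥
      ε * Real.log ((1 + ε) / (1 - ε)) := by
  classical
  have hε0 : 0 ≤ ε := by
    rw [← hε]
    have : 0 ≤ ∑ x, |P x - Q x| := Finset.sum_nonneg (fun x _ => abs_nonneg _)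
    linarith
  -- global nonnegativity of the two divergences
  have hDPQ : 0 ≤ ∑ x, P x * Real.log (P x / Q x) := by
    have h := log_sum_ineq Finset.univ P Q (fun x _ => hP x) (fun x _ => hQ x)
      (fun x _ h => (hac x).mpr h) (by rw [hP1]; norm_num) (by rw [hQ1]; norm_num)
    rw [hP1, hQ1] at h
    simpa using h
  have hDQP : 0 ≤ ∑ x, Q x * Real.log (Q x / P x) := by
    have h := log_sum_ineq Finset.univ Q P (fun x _ => hQ x) (fun x _ => hP x)
      (fun x _ h => (hac x).mp h) (by rw [hQ1]; norm_num) (by rw [hP1]; norm_num)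
    rw [hP1, hQ1] at h
    simpa using h
  rcases hε0.eq_or_lt with hε0' | hεpos
  · rw [← hε0']
    simp only [zero_mul, ge_iff_le]
    linarith
  -- main case : ε > 0
  set s : Finset α := Finset.univ.filter (fun x => Q x ≤ P x) with hs
  have hmem : ∀ x, x ∈ s ↔ Q x ≤ P x := by
    intro x; simp [hs]
  have hmemc : ∀ x, x ∈ sᶜ ↔ P x < Q x := by
    intro x; simp [hs, not_le]
  set p := ∑ x ∈ s, P x with hpdef
  set q := ∑ x ∈ s, Q x with hqdef
  have hsplitP : p + ∑ x ∈ sᶜ, P x = 1 := by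
    rw [hpdef, Finset.sum_add_sum_compl, hP1]
  have hsplitQ : q + ∑ x ∈ sᶜ, Q x = 1 := by
    rw [hqdef, Finset.sum_add_sum_compl, hQ1]
  have habs : ∑ x, |P x - Q x| = (p - q) + ((1 - q) - (1 - p)) := by
    rw [← Finset.sum_add_sum_compl s (fun x => |P x - Q x|)]
    have h1 : ∑ x ∈ s, |P x - Q x| = p - q := by
      rw [hpdef, hqdef, ← Finset.sum_sub_distrib]
      exact Finset.sum_congr rfl (fun x hx => abs_of_nonneg (by
        have := (hmem x).mp hx; linarith))
    have h2 : ∑ x ∈ sᶜ, |P x - Q x| = (1 - q) - (1 - p) := by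
      have e1 : (1:ℝ) - q = ∑ x ∈ sᶜ, Q x := by linarith
      have e2 : (1:ℝ) - p = ∑ x ∈ sᶜ, P x := by linarith
      rw [e1, e2, ← Finset.sum_sub_distrib]
      exact Finset.sum_congr rfl (fun x hx => by
        have := (hmemc x).mp hx
        rw [abs_of_nonpos (by linarith)]; ring)
    rw [h1, h2]
  have hpq : p - q = ε := by
    rw [← hε, habs]; ring
  have hq0 : 0 ≤ q := Finset.sum_nonneg (fun x _ => hQ x)
  have hqpos : 0 < q := by
    rcases hq0.eq_or_lt with h0 | h
    · exfalso
      have hQ0 : ∀ x ∈ s, Q x = 0 :=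
        (Finset.sum_eq_zero_iff_of_nonneg (fun x _ => hQ x)).mp h0.symm
      have hp0 : p = 0 := Finset.sum_eq_zero (fun x hx => (hac x).mpr (hQ0 x hx))
      rw [hp0, ← h0] at hpq
      linarith
    · exact h
  have hppos : 0 < p := by linarith
  have hpc0 : 0 ≤ ∑ x ∈ sᶜ, P x := Finset.sum_nonneg (fun x _ => hP x)
  have hpcpos : 0 < ∑ x ∈ sᶜ, P x := by
    rcases hpc0.eq_or_lt with h0 | h
    · exfalso
      have hP0 : ∀ x ∈ sᶜ, P x = 0 :=
        (Finset.sum_eq_zero_iff_of_nonneg (fun x _ => hP x)).mp h0.symm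
      have hqc0 : ∑ x ∈ sᶜ, Q x = 0 :=
        Finset.sum_eq_zero (fun x hx => (hac x).mp (hP0 x hx))
      have : q = 1 := by linarith
      have : p = 1 := by linarith
      linarith
    · exact h
  have hqcpos : 0 < ∑ x ∈ sᶜ, Q x := by linarith [hpcpos, hsplitP, hsplitQ]
  have hp1 : p < 1 := by linarith
  have hq1 : q < 1 := by linarith
  -- four applications of the log-sum inequality
  have hS1 := log_sum_ineq s P Q (fun x _ => hP x) (fun x _ => hQ x)
    (fun x _ h => (hac x).mpr h) hppos hqpos
  have hS2 := log_sum_ineq sᶜ P Q (fun x _ => hP x) (fun x _ => hQ x)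
    (fun x _ h => (hac x).mpr h) hpcpos hqcpos
  have hS3 := log_sum_ineq s Q P (fun x _ => hQ x) (fun x _ => hP x)
    (fun x _ h => (hac x).mp h) hqpos hppos
  have hS4 := log_sum_ineq sᶜ Q P (fun x _ => hQ x) (fun x _ => hP x)
    (fun x _ h => (hac x).mp h) hqcpos hpcpos
  have epc : ∑ x ∈ sᶜ, P x = 1 - p := by linarith
  have eqc : ∑ x ∈ sᶜ, Q x = 1 - q := by linarith
  rw [epc, eqc] at hS2 hS4
  set L1 := Real.log p
  set L2 := Real.log q
  set L3 := Real.log (1 - p)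
  set L4 := Real.log (1 - q)
  have e1 : Real.log (p / q) = L1 - L2 := Real.log_div (ne_of_gt hppos) (ne_of_gt hqpos)
  have e2 : Real.log ((1 - p) / (1 - q)) = L3 - L4 :=
    Real.log_div (by linarith) (by linarith)
  have e3 : Real.log (q / p) = L2 - L1 := Real.log_div (ne_of_gt hqpos) (ne_of_gt hppos)
  have e4 : Real.log ((1 - q) / (1 - p)) = L4 - L3 :=
    Real.log_div (by linarith) (by linarith)
  rw [e1] at hS1; rw [e2] at hS2; rw [e3] at hS3; rw [e4] at hS4
  -- key algebraic inequality
  rw [← hpdef] at hS1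
  rw [← hqdef] at hS3
  clear_value p q
  have hpe : p = q + ε := by linarith
  have h1p : (0:ℝ) < 1 + ε := by linarith
  have h1m : (0:ℝ) < 1 - ε := by linarith
  have h1mp : (0:ℝ) < 1 - p := by linarith
  have h1mq : (0:ℝ) < 1 - q := by linarith
  have hkey : (1 + ε) ^ 2 * (q * (1 - p)) ≤ (1 - ε) ^ 2 * (p * (1 - q)) := by
    have h := key_alg q ε hεpos
    rw [← hpe] at h
    exact h
  have hloglog : Real.log ((1 + ε) ^ 2 * (q * (1 - p))) ≤
      Real.log ((1 - ε) ^ 2 * (p * (1 - q))) :=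
    Real.log_le_log (mul_pos (pow_pos h1p 2) (mul_pos hqpos h1mp)) hkey
  have hlexp1 : Real.log ((1 + ε) ^ 2 * (q * (1 - p))) =
      2 * Real.log (1 + ε) + (L2 + L3) := by
    rw [Real.log_mul (ne_of_gt (pow_pos h1p 2)) (ne_of_gt (mul_pos hqpos h1mp)),
        Real.log_pow, Real.log_mul (ne_of_gt hqpos) (ne_of_gt h1mp)]
    push_cast; ring
  have hlexp2 : Real.log ((1 - ε) ^ 2 * (p * (1 - q))) =
      2 * Real.log (1 - ε) + (L1 + L4) := by
    rw [Real.log_mul (ne_of_gt (pow_pos h1m 2)) (ne_of_gt (mul_pos hppos h1mq)),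
        Real.log_pow, Real.log_mul (ne_of_gt hppos) (ne_of_gt h1mq)]
    push_cast; ring
  rw [hlexp1, hlexp2] at hloglog
  have hlogdiv : Real.log ((1 + ε) / (1 - ε)) = Real.log (1 + ε) - Real.log (1 - ε) :=
    Real.log_div (by linarith) (by linarith)
  -- split the sums over s and sᶜ
  have hsplit1 : ∑ x, P x * Real.log (P x / Q x) =
      (∑ x ∈ s, P x * Real.log (P x / Q x)) + ∑ x ∈ sᶜ, P x * Real.log (P x / Q x) :=
    (Finset.sum_add_sum_compl s _).symm
  have hsplit2 : ∑ x, Q x * Real.log (Q x / P x) =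
      (∑ x ∈ s, Q x * Real.log (Q x / P x)) + ∑ x ∈ sᶜ, Q x * Real.log (Q x / P x) :=
    (Finset.sum_add_sum_compl s _).symm
  rw [hsplit1, hsplit2, ge_iff_le, hlogdiv]
  have hcomb : ε * (L1 - L2 - L3 + L4) =
      p * (L1 - L2) + (1 - p) * (L3 - L4) + q * (L2 - L1) + (1 - q) * (L4 - L3) := by
    rw [← hpq]; ring
  have hfin : ε * (2 * (Real.log (1 + ε) - Real.log (1 - ε))) ≤
      ε * (L1 - L2 - L3 + L4) :=
    mul_le_mul_of_nonneg_left (by linarith) hεpos.le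
  linarith [hS1, hS2, hS3, hS4, hcomb, hfin]
end

section
/- (Refined Jensen inequality) Let f : ℝ → ℝ be convex on an interval containing all u_i, let P and Q be probability distributions on {1,…,n} with Q strictly positive, and let u ∈ ℝ^n. Define J_n(f,u,P) = Σ_i P(i) f(u_i) - f(Σ_i P(i) u_i) and similarly J_n(f,u,Q). Then min_i (P(i)/Q(i)) · J_n(f,u,Q) ≤ J_n(f,u,P) ≤ max_i (P(i)/Q(i)) · J_n(f,u,Q). -/
theorem refined_jensen_inequality {n : ℕ} (hn : 0 < n) (a b : ℝ) (f : ℝ → ℝ)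
    (hf : ConvexOn ℝ (Set.Icc a b) f)
    (P Q u : Fin n → ℝ)
    (hP : ∀ i, 0 ≤ P i) (hQ : ∀ i, 0 < Q i)
    (hP1 : ∑ i, P i = 1) (hQ1 : ∑ i, Q i = 1)
    (hu : ∀ i, u i ∈ Set.Icc a b) :
    (Finset.univ.inf' (Finset.univ_nonempty_iff.mpr (Fin.pos_iff_nonempty.mp hn))
        fun i => P i / Q i) *
        ((∑ i, Q i * f (u i)) - f (∑ i, Q i * u i)) ≤
      (∑ i, P i * f (u i)) - f (∑ i, P i * u i) ∧
    (∑ i, P i * f (u i)) - f (∑ i, P i * u i) ≤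
      (Finset.univ.sup' (Finset.univ_nonempty_iff.mpr (Fin.pos_iff_nonempty.mp hn))
        fun i => P i / Q i) *
        ((∑ i, Q i * f (u i)) - f (∑ i, Q i * u i)) := by
  have hne : (Finset.univ : Finset (Fin n)).Nonempty :=
    Finset.univ_nonempty_iff.mpr (Fin.pos_iff_nonempty.mp hn)
  set m := Finset.univ.inf' hne fun i => P i / Q i with hm
  set M := Finset.univ.sup' hne fun i => P i / Q i with hM
  -- basic facts
  have hmQ : ∀ i, m * Q i ≤ P i := fun i => by
    have h := Finset.inf'_le (fun i => P i / Q i) (Finset.mem_univ i)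
    rwa [le_div_iff₀ (hQ i)] at h
  have hQM : ∀ i, P i ≤ M * Q i := fun i => by
    have h := Finset.le_sup' (fun i => P i / Q i) (Finset.mem_univ i)
    rwa [div_le_iff₀ (hQ i)] at h
  have hm0 : 0 ≤ m := by
    apply Finset.le_inf'
    intro i _
    exact div_nonneg (hP i) (hQ i).le
  have hM1 : 1 ≤ M := by
    calc (1:ℝ) = ∑ i, P i := hP1.symm
    _ ≤ ∑ i, M * Q i := Finset.sum_le_sum fun i _ => hQM i
    _ = M := by rw [← Finset.mul_sum, hQ1, mul_one]
  have hM0 : 0 < M := lt_of_lt_of_le one_pos hM1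
  -- membership of averages
  have hQu : (∑ i, Q i * u i) ∈ Set.Icc a b := by
    have := Convex.sum_mem (t := Finset.univ) hf.1 (fun i _ => (hQ i).le)
      hQ1 (fun i _ => hu i)
    simpa [smul_eq_mul] using this
  have hPu : (∑ i, P i * u i) ∈ Set.Icc a b := by
    have := Convex.sum_mem (t := Finset.univ) hf.1 (fun i _ => hP i)
      hP1 (fun i _ => hu i)
    simpa [smul_eq_mul] using this
  constructor
  · -- left inequality
    set w : Option (Fin n) → ℝ := fun o => o.elim m (fun i => P i - m * Q i) with hw
    set p : Option (Fin n) → ℝ := fun o => o.elim (∑ i, Q i * u i) u with hp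
    have hw0 : ∀ o ∈ (Finset.univ : Finset (Option (Fin n))), 0 ≤ w o := by
      rintro (_ | i) _
      · exact hm0
      · simp only [hw, Option.elim]; linarith [hmQ i]
    have hw1 : ∑ o, w o = 1 := by
      rw [Fintype.sum_option]
      simp only [hw, Option.elim]
      rw [Finset.sum_sub_distrib, ← Finset.mul_sum, hP1, hQ1]
      ring
    have hpm : ∀ o ∈ (Finset.univ : Finset (Option (Fin n))), p o ∈ Set.Icc a b := by
      rintro (_ | i) _
      · exact hQu
      · exact hu i
    have hkey := hf.map_sum_le hw0 hw1 hpm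
    have harg : (∑ o, w o • p o) = ∑ i, P i * u i := by
      rw [Fintype.sum_option]
      simp only [hw, hp, Option.elim, smul_eq_mul]
      rw [Finset.sum_congr rfl (fun i _ => by ring : ∀ i ∈ Finset.univ,
        (P i - m * Q i) * u i = P i * u i - m * (Q i * u i))]
      rw [Finset.sum_sub_distrib, ← Finset.mul_sum]
      ring
    rw [harg] at hkey
    have hrhs : (∑ o, w o • f (p o)) =
        m * f (∑ i, Q i * u i) + (∑ i, P i * f (u i)) - m * ∑ i, Q i * f (u i) := by
      rw [Fintype.sum_option]
      simp only [hw, hp, Option.elim, smul_eq_mul]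
      rw [Finset.sum_congr rfl (fun i _ => by ring : ∀ i ∈ Finset.univ,
        (P i - m * Q i) * f (u i) = P i * f (u i) - m * (Q i * f (u i)))]
      rw [Finset.sum_sub_distrib, ← Finset.mul_sum]
      ring
    rw [hrhs] at hkey
    linarith
  · -- right inequality
    set w : Option (Fin n) → ℝ := fun o => o.elim (1 / M) (fun i => (M * Q i - P i) / M)
      with hw
    set p : Option (Fin n) → ℝ := fun o => o.elim (∑ i, P i * u i) u with hp
    have hw0 : ∀ o ∈ (Finset.univ : Finset (Option (Fin n))), 0 ≤ w o := by
      rintro (_ | i) _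
      · simp only [hw, Option.elim]; positivity
      · simp only [hw, Option.elim]
        exact div_nonneg (by linarith [hQM i]) hM0.le
    have hw1 : ∑ o, w o = 1 := by
      rw [Fintype.sum_option]
      simp only [hw, Option.elim, div_eq_mul_inv]
      rw [← Finset.sum_mul, Finset.sum_sub_distrib, ← Finset.mul_sum, hP1, hQ1]
      field_simp
      ring
    have hpm : ∀ o ∈ (Finset.univ : Finset (Option (Fin n))), p o ∈ Set.Icc a b := by
      rintro (_ | i) _
      · exact hPu
      · exact hu i
    have hkey := hf.map_sum_le hw0 hw1 hpm
    have harg : (∑ o, w o • p o) = ∑ i, Q i * u i := by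
      rw [Fintype.sum_option]
      simp only [hw, hp, Option.elim, smul_eq_mul, div_eq_mul_inv]
      rw [Finset.sum_congr rfl (fun i _ => by ring : ∀ i ∈ Finset.univ,
        (M * Q i - P i) * M⁻¹ * u i = (M * (Q i * u i) - P i * u i) * M⁻¹)]
      rw [← Finset.sum_mul, Finset.sum_sub_distrib, ← Finset.mul_sum]
      field_simp
      ring
    rw [harg] at hkey
    have hrhs : (∑ o, w o • f (p o)) =
        (f (∑ i, P i * u i) + M * (∑ i, Q i * f (u i)) - ∑ i, P i * f (u i)) / M := by
      rw [Fintype.sum_option]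
      simp only [hw, hp, Option.elim, smul_eq_mul, div_eq_mul_inv]
      rw [Finset.sum_congr rfl (fun i _ => by ring : ∀ i ∈ Finset.univ,
        (M * Q i - P i) * M⁻¹ * f (u i) = (M * (Q i * f (u i)) - P i * f (u i)) * M⁻¹)]
      rw [← Finset.sum_mul, Finset.sum_sub_distrib, ← Finset.mul_sum]
      field_simp
      ring
    rw [hrhs] at hkey
    rw [le_div_iff₀ hM0] at hkey
    linarith
end

section
/- Let f : (0,∞) → ℝ be convex with f(1) = 0 such that g(t) := -t·f(t) is also convex. Let P, Q be strictly positive probability distributions on a finite set A. Then min_{x∈A} (P(x)/Q(x)) · D_f(P‖Q) ≤ -D_g(P‖Q) - f(1 + χ²(P,Q)) ≤ max_{x∈A} (P(x)/Q(x)) · D_f(P‖Q). -/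
theorem aux_fdiv {α : Type*} [Fintype α] [Nonempty α]
    (f : ℝ → ℝ) (hf : ConvexOn ℝ (Set.Ioi 0) f) (hf1 : f 1 = 0)
    (Q r : α → ℝ) (hQ : ∀ x, 0 < Q x) (hr : ∀ x, 0 < r x)
    (hQ1 : ∑ x, Q x = 1) (hQr1 : ∑ x, Q x * r x = 1) :
    (Finset.univ.inf' Finset.univ_nonempty r) * (∑ x, Q x * f (r x)) ≤
      (∑ x, Q x * (r x * f (r x))) - f (∑ x, Q x * r x * r x) ∧
    (∑ x, Q x * (r x * f (r x))) - f (∑ x, Q x * r x * r x) ≤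
      (Finset.univ.sup' Finset.univ_nonempty r) * (∑ x, Q x * f (r x)) := by
  classical
  set m := Finset.univ.inf' Finset.univ_nonempty r with hmdef
  set M := Finset.univ.sup' Finset.univ_nonempty r with hMdef
  set S : ℝ := ∑ x, Q x * r x * r x with hSdef
  set D : ℝ := ∑ x, Q x * f (r x) with hDdef
  set U : ℝ := ∑ x, Q x * (r x * f (r x)) with hUdef
  have hmle : ∀ x, m ≤ r x := fun x => Finset.inf'_le _ (Finset.mem_univ x)
  have hleM : ∀ x, r x ≤ M := fun x => Finset.le_sup' _ (Finset.mem_univ x)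
  have hmpos : 0 < m := by
    obtain ⟨x, -, hx⟩ := Finset.exists_mem_eq_inf' (Finset.univ_nonempty (α := α)) r
    rw [hmdef, hx]; exact hr x
  have hS1 : 1 ≤ S := by
    have h := hf
    have key : S - 1 = ∑ x, Q x * (r x - 1)^2 := by
      rw [hSdef]
      have : ∑ x, Q x * (r x - 1)^2
          = ∑ x, (Q x * r x * r x - 2 * (Q x * r x) + Q x) := by
        refine Finset.sum_congr rfl fun x _ => by ring
      rw [this, Finset.sum_add_distrib, Finset.sum_sub_distrib, ← Finset.mul_sum, hQr1, hQ1]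
      ring
    nlinarith [Finset.sum_nonneg (fun x (_ : x ∈ Finset.univ) =>
      mul_nonneg (hQ x).le (sq_nonneg (r x - 1)))]
  have hSpos : (0:ℝ) < S := lt_of_lt_of_le one_pos hS1
  by_cases hall : ∀ x, r x = 1
  · have hD : D = 0 := by
      rw [hDdef]; refine Finset.sum_eq_zero fun x _ => by rw [hall x, hf1, mul_zero]
    have hU0 : U = 0 := by
      rw [hUdef]; refine Finset.sum_eq_zero fun x _ => by rw [hall x, hf1]; ring
    have hS : S = 1 := by
      rw [hSdef]
      have : ∑ x, Q x * r x * r x = ∑ x, Q x :=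
        Finset.sum_congr rfl fun x _ => by rw [hall x]; ring
      rw [this, hQ1]
    rw [hD, hU0, hS, hf1]
    norm_num
  · push_neg at hall
    obtain ⟨x0, hx0⟩ := hall
    -- m < 1
    have hm1 : m < 1 := by
      by_contra h
      push_neg at h
      have hzero : ∑ x, Q x * (r x - 1) = 0 := by
        have : ∑ x, Q x * (r x - 1) = ∑ x, (Q x * r x - Q x) :=
          Finset.sum_congr rfl fun x _ => by ring
        rw [this, Finset.sum_sub_distrib, hQr1, hQ1]; ring
      have hx0' : Q x0 * (r x0 - 1) = 0 := by
        have := (Finset.sum_eq_zero_iff_of_nonneg (fun x _ =>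
          mul_nonneg (hQ x).le (by linarith [hmle x]))).mp hzero x0 (Finset.mem_univ x0)
        exact this
      have : r x0 = 1 := by
        rcases mul_eq_zero.mp hx0' with h1 | h2
        · exact absurd h1 (hQ x0).ne'
        · linarith
      exact hx0 this
    have hM1 : 1 < M := by
      by_contra h
      push_neg at h
      have hzero : ∑ x, Q x * (1 - r x) = 0 := by
        have : ∑ x, Q x * (1 - r x) = ∑ x, (Q x - Q x * r x) :=
          Finset.sum_congr rfl fun x _ => by ring
        rw [this, Finset.sum_sub_distrib, hQr1, hQ1]; ring
      have hx0' : Q x0 * (1 - r x0) = 0 :=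
        (Finset.sum_eq_zero_iff_of_nonneg (fun x _ =>
          mul_nonneg (hQ x).le (by linarith [hleM x]))).mp hzero x0 (Finset.mem_univ x0)
      have : r x0 = 1 := by
        rcases mul_eq_zero.mp hx0' with h1 | h2
        · exact absurd h1 (hQ x0).ne'
        · linarith
      exact hx0 this
    have h1m : (0:ℝ) < 1 - m := by linarith
    have hM1' : (0:ℝ) < M - 1 := by linarith
    constructor
    · -- lower bound
      set w : α → ℝ := fun x => Q x * (r x - m) / (1 - m) with hwdef
      have hw0 : ∀ x ∈ Finset.univ, (0:ℝ) ≤ w x := fun x _ =>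
        div_nonneg (mul_nonneg (hQ x).le (by linarith [hmle x])) h1m.le
      have hsum_rm : ∑ x, Q x * (r x - m) = 1 - m := by
        have : ∑ x, Q x * (r x - m) = ∑ x, (Q x * r x - m * Q x) :=
          Finset.sum_congr rfl fun x _ => by ring
        rw [this, Finset.sum_sub_distrib, ← Finset.mul_sum, hQr1, hQ1]; ring
      have hw1 : ∑ x, w x = 1 := by
        rw [hwdef]
        simp only []
        rw [← Finset.sum_div, hsum_rm, div_self h1m.ne']
      have hwr : ∑ x, w x • r x = (S - m) / (1 - m) := by
        have h1 : ∑ x, w x • r x = (∑ x, (Q x * r x * r x - m * (Q x * r x))) / (1 - m) := by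
          rw [Finset.sum_div]
          refine Finset.sum_congr rfl fun x _ => ?_
          simp only [smul_eq_mul, hwdef]
          field_simp
        rw [h1, Finset.sum_sub_distrib, ← Finset.mul_sum, hQr1, ← hSdef]
        ring
      have hmemr : ∀ x ∈ Finset.univ, r x ∈ Set.Ioi (0:ℝ) := fun x _ => hr x
      have hJ := hf.map_sum_le hw0 hw1 hmemr
      rw [hwr] at hJ
      have hwf : (1 - m) * ∑ x, w x • f (r x) = U - m * D := by
        rw [Finset.mul_sum, hUdef, hDdef, Finset.mul_sum, ← Finset.sum_sub_distrib]
        refine Finset.sum_congr rfl fun x _ => ?_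
        simp only [smul_eq_mul, hwdef]
        field_simp
      set u : ℝ := (S - m) / (1 - m) with hudef
      have hupos : 0 < u := div_pos (by linarith) h1m
      have hScomb : m • (1:ℝ) + (1 - m) • u = S := by
        simp only [smul_eq_mul, hudef]
        field_simp
        ring
      have hconv := hf.2 (Set.mem_Ioi.mpr one_pos) (Set.mem_Ioi.mpr hupos)
        hmpos.le h1m.le (by ring)
      rw [hScomb, hf1] at hconv
      -- hconv : f S ≤ m * 0 + (1-m) * f u
      have h2 : (1 - m) * f u ≤ (1 - m) * ∑ x, w x • f (r x) :=
        mul_le_mul_of_nonneg_left hJ h1m.le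
      rw [hwf] at h2
      simp only [smul_eq_mul] at hconv
      linarith
    · -- upper bound
      set v : α → ℝ := fun x => Q x * (M - r x) / (M - 1) with hvdef
      have hv0 : ∀ x ∈ Finset.univ, (0:ℝ) ≤ v x := fun x _ =>
        div_nonneg (mul_nonneg (hQ x).le (by linarith [hleM x])) hM1'.le
      have hsum_Mr : ∑ x, Q x * (M - r x) = M - 1 := by
        have : ∑ x, Q x * (M - r x) = ∑ x, (M * Q x - Q x * r x) :=
          Finset.sum_congr rfl fun x _ => by ring
        rw [this, Finset.sum_sub_distrib, ← Finset.mul_sum, hQr1, hQ1]; ring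
      have hv1 : ∑ x, v x = 1 := by
        rw [hvdef]
        simp only []
        rw [← Finset.sum_div, hsum_Mr, div_self hM1'.ne']
      -- S < M
      have hSM : S < M := by
        have hterm : ∀ x ∈ Finset.univ, (0:ℝ) ≤ Q x * r x * (M - r x) := fun x _ =>
          mul_nonneg (mul_nonneg (hQ x).le (hr x).le) (by linarith [hleM x])
        have hsum : ∑ x, Q x * r x * (M - r x) = M - S := by
          have : ∑ x, Q x * r x * (M - r x) = ∑ x, (M * (Q x * r x) - Q x * r x * r x) :=
            Finset.sum_congr rfl fun x _ => by ring
          rw [this, Finset.sum_sub_distrib, ← Finset.mul_sum, hQr1, ← hSdef]; ring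
        have hMS : 0 ≤ M - S := hsum ▸ Finset.sum_nonneg hterm
        rcases eq_or_lt_of_le hMS with heq | hlt
        · exfalso
          have hzero : ∑ x, Q x * r x * (M - r x) = 0 := by rw [hsum, ← heq]
          have hall' : ∀ x, r x = M := by
            intro x
            have := (Finset.sum_eq_zero_iff_of_nonneg hterm).mp hzero x (Finset.mem_univ x)
            rcases mul_eq_zero.mp this with h1 | h2
            · exact absurd h1 (mul_pos (hQ x) (hr x)).ne'
            · linarith
          have : ∑ x, Q x * r x = M := by
            have : ∑ x, Q x * r x = ∑ x, Q x * M :=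
              Finset.sum_congr rfl fun x _ => by rw [hall' x]
            rw [this, ← Finset.sum_mul, hQ1, one_mul]
          linarith [hQr1 ▸ this]
        · linarith
      have hvr : ∑ x, v x • r x = (M - S) / (M - 1) := by
        have h1 : ∑ x, v x • r x = (∑ x, (M * (Q x * r x) - Q x * r x * r x)) / (M - 1) := by
          rw [Finset.sum_div]
          refine Finset.sum_congr rfl fun x _ => ?_
          simp only [smul_eq_mul, hvdef]
          field_simp
        rw [h1, Finset.sum_sub_distrib, ← Finset.mul_sum, hQr1, ← hSdef]
        ring
      have hmemr : ∀ x ∈ Finset.univ, r x ∈ Set.Ioi (0:ℝ) := fun x _ => hr x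
      have hJ := hf.map_sum_le hv0 hv1 hmemr
      rw [hvr] at hJ
      have hvf : (M - 1) * ∑ x, v x • f (r x) = M * D - U := by
        rw [Finset.mul_sum, hUdef, hDdef, Finset.mul_sum, ← Finset.sum_sub_distrib]
        refine Finset.sum_congr rfl fun x _ => ?_
        simp only [smul_eq_mul, hvdef]
        field_simp
      set u' : ℝ := (M - S) / (M - 1) with hudef
      have hu'pos : 0 < u' := div_pos (by linarith) hM1'
      have hMpos : (0:ℝ) < M := by linarith
      have hcomb : (1/M) • S + ((M-1)/M) • u' = 1 := by
        simp only [smul_eq_mul, hudef]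
        field_simp
        ring
      have hconv : f ((1/M) • S + ((M-1)/M) • u') ≤ (1/M) • f S + ((M-1)/M) • f u' :=
        hf.2 (Set.mem_Ioi.mpr hSpos) (Set.mem_Ioi.mpr hu'pos)
          (by positivity) (div_nonneg hM1'.le hMpos.le) (by field_simp; ring)
      rw [hcomb, hf1] at hconv
      -- hconv : 0 ≤ (1/M) * f S + ((M-1)/M) * f u'
      have h2 : (M - 1) * f u' ≤ (M - 1) * ∑ x, v x • f (r x) :=
        mul_le_mul_of_nonneg_left hJ hM1'.le
      rw [hvf] at h2
      simp only [smul_eq_mul] at hconv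
      have h3 : 0 ≤ f S + (M - 1) * f u' := by
        have := mul_le_mul_of_nonneg_left hconv hMpos.le
        field_simp at this
        linarith
      linarith

theorem new_inequality_relating_f_divergences {α : Type*} [Fintype α] [Nonempty α]
    (f : ℝ → ℝ) (hf : ConvexOn ℝ (Set.Ioi 0) f) (hf1 : f 1 = 0)
    (hg : ConvexOn ℝ (Set.Ioi 0) fun t => -(t * f t))
    (P Q : α → ℝ) (hP : ∀ x, 0 < P x) (hQ : ∀ x, 0 < Q x)
    (hP1 : ∑ x, P x = 1) (hQ1 : ∑ x, Q x = 1) :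
    (Finset.univ.inf' Finset.univ_nonempty fun x => P x / Q x) *
        (∑ x, Q x * f (P x / Q x)) ≤
      -(∑ x, Q x * -(P x / Q x * f (P x / Q x))) -
        f (1 + ∑ x, (P x - Q x) ^ 2 / Q x) ∧
    -(∑ x, Q x * -(P x / Q x * f (P x / Q x))) -
        f (1 + ∑ x, (P x - Q x) ^ 2 / Q x) ≤
      (Finset.univ.sup' Finset.univ_nonempty fun x => P x / Q x) *
        (∑ x, Q x * f (P x / Q x)) := by
  have hQr : ∀ x, Q x * (P x / Q x) = P x := fun x => mul_div_cancel₀ (P x) (hQ x).ne'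
  have hQr1 : ∑ x, Q x * (P x / Q x) = 1 := by
    rw [Finset.sum_congr rfl fun x _ => hQr x]; exact hP1
  have key := aux_fdiv f hf hf1 Q (fun x => P x / Q x) hQ
    (fun x => div_pos (hP x) (hQ x)) hQ1 hQr1
  have hneg : -(∑ x, Q x * -(P x / Q x * f (P x / Q x)))
      = ∑ x, Q x * (P x / Q x * f (P x / Q x)) := by
    rw [← Finset.sum_neg_distrib]
    exact Finset.sum_congr rfl fun x _ => by ring
  have hchi : 1 + ∑ x, (P x - Q x) ^ 2 / Q x
      = ∑ x, Q x * (P x / Q x) * (P x / Q x) := by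
    have h1 : ∀ x ∈ Finset.univ (α := α), (P x - Q x) ^ 2 / Q x
        = Q x * (P x / Q x) * (P x / Q x) - 2 * P x + Q x := by
      intro x _
      have hne := (hQ x).ne'
      field_simp
      ring
    rw [Finset.sum_congr rfl h1, Finset.sum_add_distrib, Finset.sum_sub_distrib,
      ← Finset.mul_sum, hP1, hQ1]
    ring
  rw [hneg, hchi]
  exact key
end

section
/- Let P, Q be strictly positive probability distributions on a finite set A. Then min_{x∈A} (P(x)/Q(x)) · D(Q‖P) ≤ log(1 + χ²(P,Q)) - D(P‖Q) ≤ max_{x∈A} (P(x)/Q(x)) · D(Q‖P). -/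
open Finset

private lemma chi_upper_core {α : Type*} [Fintype α] [Nonempty α] (Q r : α → ℝ) (M : ℝ)
    (hQ : ∀ x, 0 < Q x) (hr : ∀ x, 0 < r x)
    (hQ1 : ∑ x, Q x = 1) (hr1 : ∑ x, Q x * r x = 1)
    (hM : ∀ x, r x ≤ M) :
    Real.log (∑ x, Q x * r x ^ 2) - ∑ x, Q x * (r x * Real.log (r x)) ≤
      M * ∑ x, Q x * (-Real.log (r x)) := by
  have hS : 0 < ∑ x, Q x * r x ^ 2 :=
    Finset.sum_pos (fun x _ => mul_pos (hQ x) (pow_pos (hr x) 2)) univ_nonempty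
  have h1 : Real.log (∑ x, Q x * r x ^ 2) ≤ (∑ x, Q x * r x ^ 2) - 1 :=
    Real.log_le_sub_one_of_pos hS
  have hpt : ∀ x ∈ Finset.univ, Q x * (r x * (r x - 1 - Real.log (r x))) ≤
      Q x * (M * (r x - 1 - Real.log (r x))) := by
    intro x _
    have hlog : Real.log (r x) ≤ r x - 1 := Real.log_le_sub_one_of_pos (hr x)
    have h0 : 0 ≤ r x - 1 - Real.log (r x) := by linarith
    exact mul_le_mul_of_nonneg_left (mul_le_mul_of_nonneg_right (hM x) h0) (hQ x).le
  have hsum := Finset.sum_le_sum hpt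
  have e1 : ∑ x, Q x * (r x * (r x - 1 - Real.log (r x))) =
      (∑ x, Q x * r x ^ 2) - (∑ x, Q x * r x) - ∑ x, Q x * (r x * Real.log (r x)) := by
    rw [← Finset.sum_sub_distrib, ← Finset.sum_sub_distrib]
    exact Finset.sum_congr rfl fun x _ => by ring
  have e2 : ∑ x, Q x * (M * (r x - 1 - Real.log (r x))) =
      M * (∑ x, Q x * r x) - M * (∑ x, Q x) + M * ∑ x, Q x * (-Real.log (r x)) := by
    rw [Finset.mul_sum, Finset.mul_sum, Finset.mul_sum, ← Finset.sum_sub_distrib,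
      ← Finset.sum_add_distrib]
    exact Finset.sum_congr rfl fun x _ => by ring
  rw [e1, e2, hr1, hQ1] at hsum
  linarith

private lemma chi_lower_core {α : Type*} [Fintype α] [Nonempty α] (Q r : α → ℝ) (m : ℝ)
    (hQ : ∀ x, 0 < Q x) (hr : ∀ x, 0 < r x)
    (hQ1 : ∑ x, Q x = 1) (hr1 : ∑ x, Q x * r x = 1)
    (hm0 : 0 ≤ m) (hm : ∀ x, m ≤ r x) :
    m * ∑ x, Q x * (-Real.log (r x)) ≤
      Real.log (∑ x, Q x * r x ^ 2) - ∑ x, Q x * (r x * Real.log (r x)) := by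
  -- m ≤ 1
  have hm1 : m ≤ 1 := by
    have h : ∑ x, Q x * m ≤ ∑ x, Q x * r x :=
      Finset.sum_le_sum fun x _ => mul_le_mul_of_nonneg_left (hm x) (hQ x).le
    rw [hr1, ← Finset.sum_mul, hQ1, one_mul] at h
    exact h
  -- 1 ≤ S
  have hS1 : 1 ≤ ∑ x, Q x * r x ^ 2 := by
    have h : (∑ x, Q x * r x ^ 2) - 2 * (∑ x, Q x * r x) + (∑ x, Q x) =
        ∑ x, Q x * (r x - 1) ^ 2 := by
      rw [Finset.mul_sum, ← Finset.sum_sub_distrib, ← Finset.sum_add_distrib]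
      exact Finset.sum_congr rfl fun x _ => by ring
    have h0 : 0 ≤ ∑ x, Q x * (r x - 1) ^ 2 :=
      Finset.sum_nonneg fun x _ => mul_nonneg (hQ x).le (sq_nonneg _)
    rw [hr1, hQ1] at h
    linarith
  rcases eq_or_lt_of_le hm1 with hm1e | hm1l
  · -- m = 1 : then r ≡ 1
    have hall : ∀ x, r x = 1 := by
      have hz : ∑ x, Q x * (r x - 1) = 0 := by
        rw [Finset.sum_congr rfl fun x _ => (by ring :
          Q x * (r x - 1) = Q x * r x - Q x), Finset.sum_sub_distrib, hr1, hQ1, sub_self]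
      have hnn : ∀ x ∈ Finset.univ, (0:ℝ) ≤ Q x * (r x - 1) := fun x _ =>
        mul_nonneg (hQ x).le (by have h := hm x; rw [hm1e] at h; linarith)
      intro x
      have h := (Finset.sum_eq_zero_iff_of_nonneg hnn).mp hz x (mem_univ x)
      have hQx := (hQ x).ne'
      have := mul_eq_zero.mp h
      rcases this with h' | h'
      · exact absurd h' hQx
      · linarith
    simp only [hall, one_pow, mul_one, Real.log_one, mul_zero, neg_zero, one_mul]
    rw [hQ1]
    simp
  · -- m < 1
    have h1m : (0:ℝ) < 1 - m := by linarith
    have hw0 : ∀ x ∈ Finset.univ, 0 ≤ Q x * (r x - m) / (1 - m) := fun x _ =>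
      div_nonneg (mul_nonneg (hQ x).le (by linarith [hm x])) h1m.le
    have hw1 : ∑ x, Q x * (r x - m) / (1 - m) = 1 := by
      rw [← Finset.sum_div, Finset.sum_congr rfl fun x _ => (by ring :
        Q x * (r x - m) = Q x * r x - m * Q x), Finset.sum_sub_distrib, ← Finset.mul_sum,
        hr1, hQ1, mul_one]
      field_simp
    have hmem : ∀ x ∈ Finset.univ, r x ∈ Set.Ioi (0:ℝ) := fun x _ => hr x
    have hjensen := (strictConcaveOn_log_Ioi.concaveOn).le_map_sum hw0 hw1 hmem
    have hwr : ∑ x, (Q x * (r x - m) / (1 - m)) * r x =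
        ((∑ x, Q x * r x ^ 2) - m) / (1 - m) := by
      rw [Finset.sum_congr rfl fun x _ => (by field_simp :
        Q x * (r x - m) / (1 - m) * r x = (Q x * r x ^ 2 - m * (Q x * r x)) / (1 - m)),
        ← Finset.sum_div, Finset.sum_sub_distrib, ← Finset.mul_sum, hr1, mul_one]
    have ha0 : 0 < ((∑ x, Q x * r x ^ 2) - m) / (1 - m) := by
      apply div_pos _ h1m; linarith
    -- AM-GM : a^(1-m) ≤ S
    have hamgm : (((∑ x, Q x * r x ^ 2) - m) / (1 - m)) ^ (1 - m) ≤ ∑ x, Q x * r x ^ 2 := by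
      calc (((∑ x, Q x * r x ^ 2) - m) / (1 - m)) ^ (1 - m)
          = (((∑ x, Q x * r x ^ 2) - m) / (1 - m)) ^ (1 - m) * (1:ℝ) ^ m := by
            rw [Real.one_rpow, mul_one]
        _ ≤ (1 - m) * (((∑ x, Q x * r x ^ 2) - m) / (1 - m)) + m * 1 :=
            Real.geom_mean_le_arith_mean2_weighted (by linarith) hm0 ha0.le zero_le_one
              (by ring)
        _ = ∑ x, Q x * r x ^ 2 := by field_simp; ring
    have hlog : (1 - m) * Real.log (((∑ x, Q x * r x ^ 2) - m) / (1 - m)) ≤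
        Real.log (∑ x, Q x * r x ^ 2) := by
      rw [← Real.log_rpow ha0]
      exact Real.log_le_log (Real.rpow_pos_of_pos ha0 _) hamgm
    have hjen : ∑ x, (Q x * (r x - m) / (1 - m)) * Real.log (r x) ≤
        Real.log (((∑ x, Q x * r x ^ 2) - m) / (1 - m)) := by
      have h := hjensen
      simp only [smul_eq_mul] at h
      rw [hwr] at h
      exact h
    have hkey : ∑ x, Q x * ((r x - m) * Real.log (r x)) ≤ Real.log (∑ x, Q x * r x ^ 2) := by
      have h2 : ∑ x, Q x * ((r x - m) * Real.log (r x)) =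
          (1 - m) * ∑ x, (Q x * (r x - m) / (1 - m)) * Real.log (r x) := by
        rw [Finset.mul_sum]
        refine Finset.sum_congr rfl fun x _ => ?_
        field_simp
      rw [h2]
      calc (1 - m) * ∑ x, (Q x * (r x - m) / (1 - m)) * Real.log (r x)
          ≤ (1 - m) * Real.log (((∑ x, Q x * r x ^ 2) - m) / (1 - m)) :=
            mul_le_mul_of_nonneg_left hjen h1m.le
        _ ≤ Real.log (∑ x, Q x * r x ^ 2) := hlog
    have hexp : ∑ x, Q x * ((r x - m) * Real.log (r x)) =
        (∑ x, Q x * (r x * Real.log (r x))) + m * ∑ x, Q x * (-Real.log (r x)) := by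
      rw [Finset.mul_sum, ← Finset.sum_add_distrib]
      exact Finset.sum_congr rfl fun x _ => by ring
    rw [hexp] at hkey
    linarith

theorem relative_entropy_chi_squared_inequality {α : Type*} [Fintype α] [Nonempty α]
    (P Q : α → ℝ) (hP : ∀ x, 0 < P x) (hQ : ∀ x, 0 < Q x)
    (hP1 : ∑ x, P x = 1) (hQ1 : ∑ x, Q x = 1) :
    (Finset.univ.inf' Finset.univ_nonempty fun x => P x / Q x) *
        (∑ x, Q x * Real.log (Q x / P x)) ≤
      Real.log (1 + ((∑ x, P x ^ 2 / Q x) - 1)) -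
        ∑ x, P x * Real.log (P x / Q x) ∧
    Real.log (1 + ((∑ x, P x ^ 2 / Q x) - 1)) -
        ∑ x, P x * Real.log (P x / Q x) ≤
      (Finset.univ.sup' Finset.univ_nonempty fun x => P x / Q x) *
        (∑ x, Q x * Real.log (Q x / P x)) := by
  have hr : ∀ x, 0 < P x / Q x := fun x => div_pos (hP x) (hQ x)
  have hQr : ∀ x, Q x * (P x / Q x) = P x := fun x => by
    have := (hQ x).ne'
    field_simp
  have hr1 : ∑ x, Q x * (P x / Q x) = 1 := by
    rw [Finset.sum_congr rfl fun x _ => hQr x]; exact hP1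
  have eS : 1 + ((∑ x, P x ^ 2 / Q x) - 1) = ∑ x, Q x * (P x / Q x) ^ 2 := by
    rw [Finset.sum_congr rfl fun x _ => (by
      have := (hQ x).ne'
      field_simp : P x ^ 2 / Q x = Q x * (P x / Q x) ^ 2)]
    ring
  have eD : ∑ x, P x * Real.log (P x / Q x) = ∑ x, Q x * ((P x / Q x) * Real.log (P x / Q x)) :=
    Finset.sum_congr rfl fun x _ => by rw [← mul_assoc, hQr x]
  have eK : ∑ x, Q x * Real.log (Q x / P x) = ∑ x, Q x * (-Real.log (P x / Q x)) :=
    Finset.sum_congr rfl fun x _ => by rw [← Real.log_inv, inv_div]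
  have hm : ∀ x, (Finset.univ.inf' Finset.univ_nonempty fun x => P x / Q x) ≤ P x / Q x :=
    fun x => Finset.inf'_le (fun y => P y / Q y) (mem_univ x)
  have hM : ∀ x, P x / Q x ≤ (Finset.univ.sup' Finset.univ_nonempty fun x => P x / Q x) :=
    fun x => Finset.le_sup' (fun y => P y / Q y) (mem_univ x)
  have hm0 : 0 ≤ Finset.univ.inf' Finset.univ_nonempty fun x => P x / Q x := by
    obtain ⟨x, _, hx⟩ := Finset.exists_mem_eq_inf' Finset.univ_nonempty fun x => P x / Q x
    rw [hx]; exact (hr x).le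
  rw [eS, eD, eK]
  exact ⟨chi_lower_core Q (fun x => P x / Q x) _ hQ hr hQ1 hr1 hm0 hm,
    chi_upper_core Q (fun x => P x / Q x) _ hQ hr hQ1 hr1 hM⟩
end

section
/- For strictly positive probability distributions P and Q on a finite set, χ²(P,Q) ≥ e^{D(P‖Q)} - 1, equivalently log(1 + χ²(P,Q)) ≥ D(P‖Q). -/
theorem chi_squared_exp_divergence_bound {α : Type*} [Fintype α] [Nonempty α]
    (P Q : α → ℝ) (hP : ∀ x, 0 < P x) (hQ : ∀ x, 0 < Q x)
    (hP1 : ∑ x, P x = 1) (hQ1 : ∑ x, Q x = 1) :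
    (∑ x, P x ^ 2 / Q x) - 1 ≥
        Real.exp (∑ x, P x * Real.log (P x / Q x)) - 1 ∧
      Real.log (1 + ((∑ x, P x ^ 2 / Q x) - 1)) ≥
        ∑ x, P x * Real.log (P x / Q x) := by
  have hS : 0 < ∑ x, P x ^ 2 / Q x :=
    Finset.sum_pos (fun x _ => div_pos (pow_pos (hP x) 2) (hQ x)) Finset.univ_nonempty
  have key : (∑ x, P x * Real.log (P x / Q x)) ≤ Real.log (∑ x, P x ^ 2 / Q x) := by
    have := ConcaveOn.le_map_sum strictConcaveOn_log_Ioi.concaveOn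
      (t := Finset.univ) (w := P) (p := fun x => P x / Q x)
      (fun i _ => (hP i).le) hP1
      (fun i _ => Set.mem_Ioi.mpr (div_pos (hP i) (hQ i)))
    have e : ∀ x : α, P x * (P x / Q x) = P x ^ 2 / Q x := fun x => by ring
    simpa [smul_eq_mul, e] using this
  constructor
  · have := Real.exp_le_exp.mpr key
    rw [Real.exp_log hS] at this
    linarith
  · have : 1 + ((∑ x, P x ^ 2 / Q x) - 1) = ∑ x, P x ^ 2 / Q x := by ring
    rw [this]
    exact key
end

section
/- Let P, Q be strictly positive probability distributions on a finite set A. Then min_{x∈A} (P(x)/Q(x)) · χ²(Q,P) ≤ χ²(P,Q)/(1 + χ²(P,Q)) ≤ max_{x∈A} (P(x)/Q(x)) · χ²(Q,P). -/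
theorem chi_squared_dual_inequality {α : Type*} [Fintype α] [Nonempty α]
    (P Q : α → ℝ) (hP : ∀ x, 0 < P x) (hQ : ∀ x, 0 < Q x)
    (hP1 : ∑ x, P x = 1) (hQ1 : ∑ x, Q x = 1) :
    (Finset.univ.inf' Finset.univ_nonempty fun x => P x / Q x) *
        (∑ x, (Q x - P x) ^ 2 / P x) ≤
      (∑ x, (P x - Q x) ^ 2 / Q x) / (1 + ∑ x, (P x - Q x) ^ 2 / Q x) ∧
    (∑ x, (P x - Q x) ^ 2 / Q x) / (1 + ∑ x, (P x - Q x) ^ 2 / Q x) ≤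
      (Finset.univ.sup' Finset.univ_nonempty fun x => P x / Q x) *
        (∑ x, (Q x - P x) ^ 2 / P x) := by
  set m := Finset.univ.inf' Finset.univ_nonempty fun x => P x / Q x with hm_def
  set M := Finset.univ.sup' Finset.univ_nonempty fun x => P x / Q x with hM_def
  set χ := ∑ x, (P x - Q x) ^ 2 / Q x with hχ_def
  set D := ∑ x, (Q x - P x) ^ 2 / P x with hD_def
  have hm_le : ∀ x, m ≤ P x / Q x := fun x => Finset.inf'_le _ (Finset.mem_univ x)
  have hM_ge : ∀ x, P x / Q x ≤ M := fun x => Finset.le_sup' (fun x => P x / Q x) (Finset.mem_univ x)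
  have hm_pos : 0 < m := by
    rw [hm_def, Finset.lt_inf'_iff]
    exact fun x _ => div_pos (hP x) (hQ x)
  have hmQ : ∀ x, m * Q x ≤ P x := fun x => by
    have h := hm_le x
    rw [le_div_iff₀ (hQ x)] at h
    linarith
  have hMQ : ∀ x, P x ≤ M * Q x := fun x => by
    have h := hM_ge x
    rw [div_le_iff₀ (hQ x)] at h
    linarith
  have hχ0 : 0 ≤ χ := Finset.sum_nonneg fun x _ => div_nonneg (sq_nonneg _) (hQ x).le
  have hD0 : 0 ≤ D := Finset.sum_nonneg fun x _ => div_nonneg (sq_nonneg _) (hP x).le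
  have hS : ∑ x, (P x) ^ 2 / Q x = 1 + χ := by
    have h : ∀ x : α, (P x) ^ 2 / Q x = (P x - Q x) ^ 2 / Q x + 2 * P x - Q x := by
      intro x
      have := (hQ x).ne'
      field_simp
      ring
    simp_rw [h]
    rw [Finset.sum_sub_distrib, Finset.sum_add_distrib, ← Finset.mul_sum, hP1, hQ1]
    ring
  constructor
  · -- lower bound
    set h : α → ℝ := fun x => 1 + m - m * (Q x / P x) with hh_def
    have hCS : (1 : ℝ) ≤ (∑ x, Q x * (h x) ^ 2) * (∑ x, (P x) ^ 2 / Q x) := by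
      have key := Finset.sum_sq_le_sum_mul_sum_of_sq_eq_mul Finset.univ
        (r := fun x => P x * h x) (f := fun x => Q x * (h x) ^ 2)
        (g := fun x => (P x) ^ 2 / Q x)
        (fun x _ => mul_nonneg (hQ x).le (sq_nonneg _))
        (fun x _ => div_nonneg (sq_nonneg _) (hQ x).le)
        (fun x _ => by
          have := (hQ x).ne'
          field_simp)
      have hsum : ∑ x, P x * h x = 1 := by
        have h1 : ∀ x : α, P x * h x = (1 + m) * P x - m * Q x := by
          intro x
          have := (hP x).ne'
          rw [hh_def]
          field_simp
        simp_rw [h1]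
        rw [Finset.sum_sub_distrib, ← Finset.mul_sum, ← Finset.mul_sum, hP1, hQ1]
        ring
      rw [hsum] at key
      simpa using key
    have hpt : ∀ x : α, Q x * (h x) ^ 2 + m * (Q x - P x) ^ 2 / P x
        + 2 * m * (Q x - P x) ≤ Q x := by
      intro x
      have hPx := hP x
      have hQx := hQ x
      have hmq := hmQ x
      have hdiff : Q x - (Q x * (h x) ^ 2 + m * (Q x - P x) ^ 2 / P x
          + 2 * m * (Q x - P x)) = m * (P x - m * Q x) * (Q x - P x) ^ 2 / (P x) ^ 2 := by
        rw [hh_def]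
        field_simp
        ring
      have hpos : 0 ≤ m * (P x - m * Q x) * (Q x - P x) ^ 2 / (P x) ^ 2 :=
        div_nonneg (mul_nonneg (mul_nonneg hm_pos.le (by linarith)) (sq_nonneg _))
          (sq_nonneg _)
      linarith [hdiff ▸ hpos]
    have hsum2 : (∑ x, Q x * (h x) ^ 2) ≤ 1 - m * D := by
      have hle := Finset.sum_le_sum fun x (_ : x ∈ Finset.univ) => hpt x
      rw [Finset.sum_add_distrib, Finset.sum_add_distrib] at hle
      have e1 : ∑ x, m * (Q x - P x) ^ 2 / P x = m * D := by
        rw [hD_def, Finset.mul_sum]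
        exact Finset.sum_congr rfl fun x _ => by rw [mul_div_assoc]
      have e2 : ∑ x, 2 * m * (Q x - P x) = 0 := by
        rw [← Finset.mul_sum, Finset.sum_sub_distrib, hP1, hQ1]
        ring
      rw [e1, e2, hQ1] at hle
      linarith
    have hSpos : (0 : ℝ) < 1 + χ := by linarith
    rw [hS] at hCS
    have h1 : (1 : ℝ) ≤ (1 - m * D) * (1 + χ) := by
      have hq0 : 0 ≤ ∑ x, Q x * (h x) ^ 2 :=
        Finset.sum_nonneg fun x _ => mul_nonneg (hQ x).le (sq_nonneg _)
      nlinarith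
    rw [le_div_iff₀ hSpos]
    nlinarith
  · -- upper bound
    have h1 : χ / (1 + χ) ≤ χ := div_le_self hχ0 (by linarith)
    have h2 : χ ≤ M * D := by
      rw [hχ_def, hD_def, Finset.mul_sum]
      refine Finset.sum_le_sum fun x _ => ?_
      have hPx := hP x
      have hQx := hQ x
      have hmq := hMQ x
      rw [div_le_iff₀ hQx]
      have e : M * ((Q x - P x) ^ 2 / P x) * Q x = M * (Q x - P x) ^ 2 * Q x / P x := by
        ring
      rw [e, le_div_iff₀ hPx]
      nlinarith [sq_nonneg (P x - Q x), sq_nonneg (Q x - P x)]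
    linarith
end

section
/- (Refined source coding bound via Jeffreys' divergence) With the notation of the source coding setup, if additionally l(u) ≥ -log_d P(u) for all u (i.e., δ(u) := l(u) + log_d P(u) ≥ 0), then Jeffreys' divergence satisfies J(P,Q) ≤ (Δ log d)/2, where J(P,Q) = (D(P‖Q)+D(Q‖P))/2 and Q(u) = d^{-l(u)}/c. -/
theorem source_coding_jeffreys_bound {U : Type*} [Fintype U] [Nonempty U]
    (P : U → ℝ) (hP : ∀ u, 0 < P u) (hP1 : ∑ u, P u = 1)
    (d : ℕ) (hd : 2 ≤ d) (l : U → ℕ)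
    (hc : ∑ u, ((d : ℝ) ^ l u)⁻¹ ≤ 1)
    (hl : ∀ u, -(Real.log (P u) / Real.log d) ≤ (l u : ℝ)) :
    let c : ℝ := ∑ u, ((d : ℝ) ^ l u)⁻¹
    let Q : U → ℝ := fun u => ((d : ℝ) ^ l u)⁻¹ / c
    let Δ : ℝ := (∑ u, P u * l u) + ∑ u, P u * (Real.log (P u) / Real.log d)
    ((∑ u, P u * Real.log (P u / Q u)) + (∑ u, Q u * Real.log (Q u / P u))) / 2 ≤
      Δ * Real.log d / 2 := by
  intro c Q Δ
  have hd1 : (1:ℝ) < d := by exact_mod_cast Nat.lt_of_lt_of_le one_lt_two hd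
  have hld : 0 < Real.log d := Real.log_pos hd1
  have hdpos : (0:ℝ) < d := lt_trans one_pos hd1
  have hpow : ∀ u, (0:ℝ) < ((d : ℝ) ^ l u)⁻¹ := fun u =>
    inv_pos.mpr (pow_pos hdpos _)
  have hcpos : 0 < c :=
    Finset.sum_pos (fun u _ => hpow u) Finset.univ_nonempty
  have hQ : ∀ u, 0 < Q u := fun u => div_pos (hpow u) hcpos
  have hsumQ : ∑ u, Q u = 1 := by
    simp only [Q, div_eq_mul_inv, ← Finset.sum_mul]
    exact mul_inv_cancel₀ (ne_of_gt hcpos)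
  have hlogQ : ∀ u, Real.log (Q u) = -((l u : ℝ) * Real.log d) - Real.log c := by
    intro u
    rw [Real.log_div (ne_of_gt (hpow u)) (ne_of_gt hcpos), Real.log_inv, Real.log_pow]
  have hA : (∑ u, P u * Real.log (P u / Q u)) = Δ * Real.log d + Real.log c := by
    have : ∀ u, P u * Real.log (P u / Q u)
        = P u * (l u : ℝ) * Real.log d
          + P u * (Real.log (P u) / Real.log d) * Real.log d + P u * Real.log c := by
      intro u
      rw [Real.log_div (ne_of_gt (hP u)) (ne_of_gt (hQ u)), hlogQ u]
      field_simp
      ring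
    rw [Finset.sum_congr rfl (fun u _ => this u)]
    simp only [Finset.sum_add_distrib, ← Finset.sum_mul, hP1, one_mul]
    simp only [Δ]
    ring
  have hB : (∑ u, Q u * Real.log (Q u / P u)) ≤ -Real.log c := by
    have key : ∀ u, Q u * Real.log (Q u / P u) ≤ -(Q u * Real.log c) := by
      intro u
      rw [Real.log_div (ne_of_gt (hQ u)) (ne_of_gt (hP u)), hlogQ u]
      have hδ : 0 ≤ (l u : ℝ) + Real.log (P u) / Real.log d := by
        have := hl u; linarith
      have h1 : 0 ≤ Q u * (((l u : ℝ) + Real.log (P u) / Real.log d) * Real.log d) :=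
        mul_nonneg (le_of_lt (hQ u)) (mul_nonneg hδ (le_of_lt hld))
      have h2 : Q u * (-((l u : ℝ) * Real.log d) - Real.log c - Real.log (P u))
          = -(Q u * Real.log c)
            - Q u * (((l u : ℝ) + Real.log (P u) / Real.log d) * Real.log d) := by
        field_simp
        ring
      linarith [h2 ▸ le_refl (Q u * (-((l u : ℝ) * Real.log d) - Real.log c - Real.log (P u)))]
    calc (∑ u, Q u * Real.log (Q u / P u)) ≤ ∑ u, -(Q u * Real.log c) :=
          Finset.sum_le_sum (fun u _ => key u)
      _ = -Real.log c := by
          simp only [Finset.sum_neg_distrib, ← Finset.sum_mul, hsumQ, one_mul]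
  rw [hA]
  linarith
end
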